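/- arXiv:2410.07051 — 9 statements merged into one kernel-verified Lean document; each statement's English description precedes it below -/
import Mathlib

section
/- Let A be a finite set, f : A → ℝ≥0 with ∑_{a∈A} f(a) ≥ 1, and p a probability mass function on A. Then the infimum over all probability mass functions p̃ on A satisfying p̃ ≤ f (pointwise) of the total variation distance ‖p̃ - p‖_TVD equals ∑_{a∈A} max(p(a) - f(a), 0). -/
/-- Lemma 1 (minimal TVD under pointwise upper bound): for `f : A → ℝ≥0` with
`∑ f ≥ 1` and a pmf `p` on a finite set `A`, the infimum of the total variation
distance `‖p̃ - p‖_TVD` over pmfs `p̃ ≤ f` equals `∑_a (p a - f a)₊`. -/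
theorem stmt0 {A : Type*} [Fintype A] (f : A → ℝ) (hf0 : ∀ a, 0 ≤ f a)
    (hf1 : 1 ≤ ∑ a, f a) (p : A → ℝ) (hp0 : ∀ a, 0 ≤ p a) (hp1 : ∑ a, p a = 1) :
    sInf {d : ℝ | ∃ pt : A → ℝ, (∀ a, 0 ≤ pt a) ∧ (∑ a, pt a = 1) ∧
        (∀ a, pt a ≤ f a) ∧ d = (1/2) * ∑ a, |pt a - p a|} =
      ∑ a, max (p a - f a) 0 := by
  classical
  set D : ℝ := ∑ a, max (p a - f a) 0 with hD
  -- key identity: for any pmf pt, (1/2)∑|pt-p| = ∑ (p-pt)₊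
  have key : ∀ pt : A → ℝ, (∑ a, pt a = 1) →
      (1/2 : ℝ) * ∑ a, |pt a - p a| = ∑ a, max (p a - pt a) 0 := by
    intro pt hsum
    have habs : ∀ a, |pt a - p a| = 2 * max (p a - pt a) 0 - (p a - pt a) := by
      intro a; rcases le_total (pt a) (p a) with h | h
      · rw [abs_of_nonpos (by linarith), max_eq_left (by linarith)]; ring
      · rw [abs_of_nonneg (by linarith), max_eq_right (by linarith)]; ring
    have : ∑ a, |pt a - p a|
        = 2 * (∑ a, max (p a - pt a) 0) - ((∑ a, p a) - ∑ a, pt a) := by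
      rw [show (2 * (∑ a, max (p a - pt a) 0) - ((∑ a, p a) - ∑ a, pt a))
          = ∑ a, (2 * max (p a - pt a) 0 - (p a - pt a)) by
        rw [Finset.sum_sub_distrib, Finset.sum_sub_distrib, Finset.mul_sum]]
      exact Finset.sum_congr rfl fun a _ => habs a
    rw [this, hp1, hsum]; ring
  -- lower bound
  have lb : ∀ pt : A → ℝ, (∀ a, pt a ≤ f a) →
      D ≤ ∑ a, max (p a - pt a) 0 := by
    intro pt hle
    apply Finset.sum_le_sum
    intro a _
    exact max_le_max (by linarith [hle a]) le_rfl
  have hD0 : 0 ≤ D := Finset.sum_nonneg fun a _ => le_max_right _ _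
  -- construction of optimal pt
  set g : A → ℝ := fun a => min (p a) (f a) with hg
  have hgsum : ∑ a, g a = 1 - D := by
    have : ∀ a, g a = p a - max (p a - f a) 0 := by
      intro a; rcases le_total (p a) (f a) with h | h
      · rw [hg]; simp [min_eq_left h, max_eq_right (by linarith : p a - f a ≤ 0)]
      · rw [hg]; simp [min_eq_right h, max_eq_left (by linarith : (0:ℝ) ≤ p a - f a)]
    rw [Finset.sum_congr rfl fun a _ => this a, Finset.sum_sub_distrib, hp1, hD]
  set T : ℝ := ∑ a, (f a - g a) with hT
  have hTval : T = (∑ a, f a) - (1 - D) := by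
    rw [hT, Finset.sum_sub_distrib, hgsum]
  have hDT : D ≤ T := by rw [hTval]; linarith
  have hT0 : 0 ≤ T := le_trans hD0 hDT
  set c : ℝ := if T = 0 then 0 else D / T with hc
  have hc0 : 0 ≤ c := by
    rw [hc]; split
    · exact le_rfl
    · exact div_nonneg hD0 hT0
  have hc1 : c ≤ 1 := by
    rw [hc]; split
    · norm_num
    · rename_i h
      exact div_le_one_of_le₀ hDT hT0
  have hcT : c * T = D := by
    rw [hc]; split
    · rename_i h; rw [h] at hDT; simp; linarith
    · rename_i h; field_simp
  set pt : A → ℝ := fun a => g a + c * (f a - g a) with hpt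
  have hgle : ∀ a, g a ≤ f a := fun a => min_le_right _ _
  have hg0 : ∀ a, 0 ≤ g a := fun a => le_min (hp0 a) (hf0 a)
  have hpt0 : ∀ a, 0 ≤ pt a := by
    intro a; simp only [hpt]
    have h1 := mul_nonneg hc0 (sub_nonneg.2 (hgle a))
    linarith [hg0 a]
  have hptsum : ∑ a, pt a = 1 := by
    rw [hpt]
    simp only
    rw [Finset.sum_add_distrib, ← Finset.mul_sum, hgsum, ← hT, hcT]
    ring
  have hptf : ∀ a, pt a ≤ f a := by
    intro a; simp only [hpt]
    have h1 := mul_nonneg (by linarith : (0:ℝ) ≤ 1 - c) (sub_nonneg.2 (hgle a))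
    nlinarith
  have hptg : ∀ a, g a ≤ pt a := by
    intro a; simp only [hpt]
    have h1 := mul_nonneg hc0 (sub_nonneg.2 (hgle a))
    linarith
  -- value at pt equals D
  have hval : ∑ a, max (p a - pt a) 0 = D := by
    apply le_antisymm
    · apply Finset.sum_le_sum
      intro a _
      rcases le_total (p a) (f a) with h | h
      · have : pt a ≥ g a := hptg a
        have hgp : g a = p a := min_eq_left h
        have : p a - pt a ≤ 0 := by linarith [hptg a]
        calc max (p a - pt a) 0 = 0 := max_eq_right this
          _ ≤ max (p a - f a) 0 := le_max_right _ _
      · have hgp : g a = f a := min_eq_right h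
        have : p a - pt a ≤ p a - f a := by linarith [hptg a]
        exact max_le_max this le_rfl
    · exact lb pt hptf
  have hmem : D ∈ {d : ℝ | ∃ pt : A → ℝ, (∀ a, 0 ≤ pt a) ∧ (∑ a, pt a = 1) ∧
      (∀ a, pt a ≤ f a) ∧ d = (1/2) * ∑ a, |pt a - p a|} :=
    ⟨pt, hpt0, hptsum, hptf, by rw [key pt hptsum, hval]⟩
  have hlbset : ∀ d ∈ {d : ℝ | ∃ pt : A → ℝ, (∀ a, 0 ≤ pt a) ∧ (∑ a, pt a = 1) ∧
      (∀ a, pt a ≤ f a) ∧ d = (1/2) * ∑ a, |pt a - p a|}, D ≤ d := by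
    rintro d ⟨q, hq0, hq1, hqf, rfl⟩
    rw [key q hq1]
    exact lb q hqf
  exact le_antisymm (csInf_le ⟨D, hlbset⟩ hmem) (le_csInf ⟨D, hmem⟩ hlbset)
end

section
/- Let A be a finite set and ξ ∈ (0, 1/e). For any pmfs p, p' on A with |p(a) - p'(a)| ≤ ξ for all a ∈ A, and any pmf q on A with p ≪ q and p' ≪ q, we have |D(p‖q) - D(p'‖q)| ≤ ξ·|A|·log(1/q_min) + |A|·ξ·log(1/ξ), where q_min := min{q(a) : a ∈ A, q(a) > 0}. -/
lemma aux_mul_log_le {a b : ℝ} (ha : 0 ≤ a) (hab : a ≤ b) :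
    a * Real.log a ≤ a * Real.log b := by
  rcases eq_or_lt_of_le ha with h | h
  · simp [← h]
  · exact mul_le_mul_of_nonneg_left (Real.log_le_log h hab) ha

lemma aux_mono {s t : ℝ} (hs : 0 < s) (hst : s ≤ t) (ht : t ≤ (Real.exp 1)⁻¹) :
    s * Real.log (1/s) ≤ t * Real.log (1/t) := by
  have ht0 : 0 < t := lt_of_lt_of_le hs hst
  have hlt : Real.log t ≤ -1 := by
    have := Real.log_le_log ht0 ht
    rw [Real.log_inv, Real.log_exp] at this; linarith
  have h1 : Real.log t - Real.log s ≤ t/s - 1 := by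
    have := Real.log_le_sub_one_of_pos (div_pos ht0 hs)
    rwa [Real.log_div (ne_of_gt ht0) (ne_of_gt hs)] at this
  have h2 : s * (Real.log t - Real.log s) ≤ t - s := by
    have h := mul_le_mul_of_nonneg_left h1 hs.le
    have h' : s * (t / s) = t := by field_simp
    nlinarith
  have h5 : (t - s) * 1 ≤ (t - s) * (-Real.log t) := by
    apply mul_le_mul_of_nonneg_left (by linarith) (by linarith)
  rw [one_div, one_div, Real.log_inv, Real.log_inv]
  nlinarith [h2, h5]

lemma aux_key {x y t : ℝ} (hx0 : 0 ≤ x) (hy1 : y ≤ 1) (hxy : x ≤ y)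
    (hs : y - x ≤ t) (ht0 : 0 < t) (hte : t ≤ (Real.exp 1)⁻¹) :
    |x * Real.log x - y * Real.log y| ≤ t * Real.log (1/t) := by
  have hy0 : 0 ≤ y := le_trans hx0 hxy
  have e1 : t * Real.log (1/t) = t * (-Real.log t) := by rw [one_div, Real.log_inv]
  have hlt : Real.log t ≤ -1 := by
    have := Real.log_le_log ht0 hte
    rw [Real.log_inv, Real.log_exp] at this; linarith
  have htle : t ≤ t * Real.log (1/t) := by rw [e1]; nlinarith
  have hrhs0 : 0 ≤ t * Real.log (1/t) := le_trans ht0.le htle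
  rw [abs_le]
  constructor
  · rw [neg_le, neg_sub]
    rcases eq_or_lt_of_le hx0 with h | hx
    · have hyl : y * Real.log y ≤ 0 :=
        mul_nonpos_iff.2 (Or.inl ⟨hy0, Real.log_nonpos hy0 hy1⟩)
      rw [← h]
      simp only [Real.log_zero, mul_zero, zero_mul, sub_zero]
      linarith
    · have hy : 0 < y := lt_of_lt_of_le hx hxy
      have h1 : Real.log y - Real.log x ≤ y/x - 1 := by
        have := Real.log_le_sub_one_of_pos (div_pos hy hx)
        rwa [Real.log_div (ne_of_gt hy) (ne_of_gt hx)] at this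
      have h2 : x * (Real.log y - Real.log x) ≤ y - x := by
        have h := mul_le_mul_of_nonneg_left h1 hx.le
        have h' : x * (y / x) = y := by field_simp
        nlinarith
      have h3 : (y - x) * Real.log y ≤ 0 :=
        mul_nonpos_iff.2 (Or.inl ⟨by linarith, Real.log_nonpos hy0 hy1⟩)
      nlinarith [h2, h3, hs, htle]
  · rcases eq_or_lt_of_le (sub_nonneg.2 hxy) with h | hsx
    · have hxy' : x = y := by linarith [h]
      rw [hxy']; simpa using hrhs0
    · have hsy : y - x ≤ y := by linarith
      have h1 : x * Real.log x ≤ x * Real.log y := aux_mul_log_le hx0 hxy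
      have h2 : (y - x) * Real.log (y - x) ≤ (y - x) * Real.log y :=
        aux_mul_log_le (le_of_lt hsx) hsy
      have h4 : (y - x) * Real.log (1/(y - x)) ≤ t * Real.log (1/t) := aux_mono hsx hs hte
      have e2 : (y - x) * Real.log (1/(y - x)) = -((y - x) * Real.log (y - x)) := by
        rw [one_div, Real.log_inv]; ring
      nlinarith [h1, h2, h4]

/-- Continuity of the KL divergence (Lemma 5): for pmfs `p, p'` with
`|p a - p' a| ≤ ξ` (where `ξ ∈ (0, 1/e)`), both absolutely continuous w.r.t.
a pmf `q`, one has
`|D(p‖q) - D(p'‖q)| ≤ ξ·|A|·log(1/q_min) + |A|·ξ·log(1/ξ)`,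
where `q_min` is the least positive value of `q`.  (KL divergence written with
the convention `0·log(0/·) = 0`, which holds for `Real.log` since `log 0 = 0`.) -/
theorem stmt6 {A : Type*} [Fintype A] (ξ : ℝ)
    (hξ : ξ ∈ Set.Ioo (0:ℝ) (Real.exp 1)⁻¹)
    (p p' q : A → ℝ)
    (hp0 : ∀ a, 0 ≤ p a) (hp1 : ∑ a, p a = 1)
    (hp'0 : ∀ a, 0 ≤ p' a) (hp'1 : ∑ a, p' a = 1)
    (hq0 : ∀ a, 0 ≤ q a) (hq1 : ∑ a, q a = 1)
    (hclose : ∀ a, |p a - p' a| ≤ ξ)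
    (hac : ∀ a, q a = 0 → p a = 0) (hac' : ∀ a, q a = 0 → p' a = 0)
    (qmin : ℝ) (hqmin : IsLeast {x : ℝ | ∃ a, 0 < q a ∧ q a = x} qmin) :
    |(∑ a, p a * Real.log (p a / q a)) - ∑ a, p' a * Real.log (p' a / q a)| ≤
      ξ * (Fintype.card A : ℝ) * Real.log (1/qmin) +
        (Fintype.card A : ℝ) * ξ * Real.log (1/ξ) := by
  obtain ⟨hξ0, hξe⟩ := hξ
  -- facts about qmin
  obtain ⟨⟨a0, ha0q, ha0e⟩, hqlb⟩ := hqmin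
  have hqmin0 : 0 < qmin := ha0e ▸ ha0q
  have hle1 : ∀ (f : A → ℝ), (∀ a, 0 ≤ f a) → (∑ a, f a = 1) → ∀ a, f a ≤ 1 := by
    intro f hf hf1 a
    rw [← hf1]
    exact Finset.single_le_sum (fun b _ => hf b) (Finset.mem_univ a)
  have hqmin1 : qmin ≤ 1 := ha0e ▸ hle1 q hq0 hq1 a0
  have hlogqmin : 0 ≤ Real.log (1/qmin) := by
    rw [one_div, Real.log_inv]
    linarith [Real.log_nonpos hqmin0.le hqmin1]
  have hlogξ : 0 ≤ Real.log (1/ξ) := by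
    rw [one_div, Real.log_inv]
    have h1 : ξ ≤ 1 := by
      have : (Real.exp 1)⁻¹ ≤ 1 := by
        rw [inv_le_one_iff₀]; right; linarith [Real.one_le_exp (by norm_num : (0:ℝ) ≤ 1)]
      linarith
    linarith [Real.log_nonpos hξ0.le h1]
  -- rewrite each term
  have hrw : ∀ (f : A → ℝ), (∀ a, 0 ≤ f a) → (∀ a, q a = 0 → f a = 0) →
      ∀ a, f a * Real.log (f a / q a) = f a * Real.log (f a) - f a * Real.log (q a) := by
    intro f hf hfac a
    rcases eq_or_lt_of_le (hf a) with h | h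
    · simp [← h]
    · have hqa : q a ≠ 0 := fun hq => absurd h (by simp [hfac a hq])
      rw [Real.log_div (ne_of_gt h) hqa, mul_sub]
  -- per-element bound
  have hbound : ∀ a,
      |(p a * Real.log (p a) - p a * Real.log (q a)) -
        (p' a * Real.log (p' a) - p' a * Real.log (q a))| ≤
      ξ * Real.log (1/qmin) + ξ * Real.log (1/ξ) := by
    intro a
    have hA : |p a * Real.log (p a) - p' a * Real.log (p' a)| ≤ ξ * Real.log (1/ξ) := by
      rcases le_total (p a) (p' a) with h | h
      · exact aux_key (hp0 a) (hle1 p' hp'0 hp'1 a) h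
          (by have := hclose a; rw [abs_le] at this; linarith [this.1]) hξ0 hξe.le
      · rw [abs_sub_comm]
        exact aux_key (hp'0 a) (hle1 p hp0 hp1 a) h
          (by have := hclose a; rw [abs_le] at this; linarith [this.2]) hξ0 hξe.le
    have hB : |(p a - p' a) * Real.log (q a)| ≤ ξ * Real.log (1/qmin) := by
      rcases eq_or_lt_of_le (hq0 a) with h | h
      · rw [← h]
        simp only [Real.log_zero, mul_zero, abs_zero]
        exact mul_nonneg hξ0.le hlogqmin
      · have hq1a : qmin ≤ q a := hqlb ⟨a, h, rfl⟩
        have hqa1 : q a ≤ 1 := hle1 q hq0 hq1 a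
        have hlq : |Real.log (q a)| ≤ Real.log (1/qmin) := by
          rw [abs_of_nonpos (Real.log_nonpos h.le hqa1), one_div, Real.log_inv]
          exact neg_le_neg (Real.log_le_log hqmin0 hq1a)
        rw [abs_mul]
        exact mul_le_mul (hclose a) hlq (abs_nonneg _) hξ0.le
    calc |(p a * Real.log (p a) - p a * Real.log (q a)) -
        (p' a * Real.log (p' a) - p' a * Real.log (q a))|
        = |(p a * Real.log (p a) - p' a * Real.log (p' a)) - (p a - p' a) * Real.log (q a)| := by
          ring_nf
      _ ≤ |p a * Real.log (p a) - p' a * Real.log (p' a)| + |(p a - p' a) * Real.log (q a)| :=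
          abs_sub _ _
      _ ≤ ξ * Real.log (1/ξ) + ξ * Real.log (1/qmin) := add_le_add hA hB
      _ = ξ * Real.log (1/qmin) + ξ * Real.log (1/ξ) := by ring
  -- assemble
  calc |(∑ a, p a * Real.log (p a / q a)) - ∑ a, p' a * Real.log (p' a / q a)|
      = |∑ a, ((p a * Real.log (p a) - p a * Real.log (q a)) -
          (p' a * Real.log (p' a) - p' a * Real.log (q a)))| := by
        rw [← Finset.sum_sub_distrib]
        congr 1
        apply Finset.sum_congr rfl
        intro a _
        rw [hrw p hp0 hac a, hrw p' hp'0 hac' a]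
    _ ≤ ∑ a, |(p a * Real.log (p a) - p a * Real.log (q a)) -
          (p' a * Real.log (p' a) - p' a * Real.log (q a))| :=
        Finset.abs_sum_le_sum_abs _ _
    _ ≤ ∑ _a : A, (ξ * Real.log (1/qmin) + ξ * Real.log (1/ξ)) :=
        Finset.sum_le_sum (fun a _ => hbound a)
    _ = (Fintype.card A : ℝ) * (ξ * Real.log (1/qmin) + ξ * Real.log (1/ξ)) := by
        rw [Finset.sum_const, Finset.card_univ, nsmul_eq_mul]
    _ = ξ * (Fintype.card A : ℝ) * Real.log (1/qmin) +
        (Fintype.card A : ℝ) * ξ * Real.log (1/ξ) := by ring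
end

section
/- Let X be a finite set and n a positive integer. For every pmf p on X there exists a pmf p' on X with n·p'(x) ∈ ℤ for all x ∈ X and |p(x) - p'(x)| ≤ 1/n for all x ∈ X. -/
/-! Round the partial sums rather than the terms: adding the points of `X` one at a time, let
`n·p'(x)` be the jump of `⌊n · (partial sum of p)⌋` caused by adding `x`. The jumps are
nonnegative integers, they telescope to `⌊n · 1⌋ = n`, and each differs from `n·p(x)` by a
difference of two fractional parts, hence by less than `1`. -/

open Finset

theorem abs_sub_floor_add_sub_floor_lt_one (s a : ℝ) :
    |a - (⌊s + a⌋ - ⌊s⌋ : ℤ)| < 1 := by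
  have key : a - ((⌊s + a⌋ - ⌊s⌋ : ℤ) : ℝ) = Int.fract (s + a) - Int.fract s := by
    push_cast [Int.fract]; ring
  rw [key, abs_sub_lt_iff]
  constructor <;> linarith [Int.fract_nonneg s, Int.fract_lt_one s,
    Int.fract_nonneg (s + a), Int.fract_lt_one (s + a)]

theorem Finset.exists_int_approx_sum_eq_floor {ι : Type*} [DecidableEq ι] (s : Finset ι)
    (a : ι → ℝ) (ha : ∀ i ∈ s, 0 ≤ a i) :
    ∃ k : ι → ℤ, (∀ i ∈ s, 0 ≤ k i) ∧ ∑ i ∈ s, k i = ⌊∑ i ∈ s, a i⌋ ∧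
      ∀ i ∈ s, |a i - k i| < 1 := by
  induction s using Finset.induction_on with
  | empty => exact ⟨0, by simp⟩
  | @insert x s hx ih =>
    obtain ⟨k, hk0, hksum, hkapprox⟩ := ih fun i hi => ha i (mem_insert_of_mem hi)
    set S := ∑ i ∈ s, a i
    let k' : ι → ℤ := Function.update k x (⌊S + a x⌋ - ⌊S⌋)
    have hk'x : k' x = ⌊S + a x⌋ - ⌊S⌋ := Function.update_self _ _ _
    have hk'_of_mem : ∀ i ∈ s, k' i = k i := fun i hi =>
      Function.update_of_ne (ne_of_mem_of_not_mem hi hx) _ _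
    refine ⟨k', ?_, ?_, ?_⟩
    · rw [forall_mem_insert, hk'x, sub_nonneg]
      exact ⟨Int.floor_mono (le_add_of_nonneg_right (ha x (mem_insert_self x s))),
        fun i hi => hk'_of_mem i hi ▸ hk0 i hi⟩
    · rw [sum_insert hx, sum_insert hx, sum_congr rfl hk'_of_mem, hksum, hk'x, add_comm (a x),
        sub_add_cancel]
    · rw [forall_mem_insert, hk'x]
      exact ⟨abs_sub_floor_add_sub_floor_lt_one S (a x),
        fun i hi => hk'_of_mem i hi ▸ hkapprox i hi⟩

/-- Type approximation (Lemma 3): for every pmf `p` on a finite set `X` and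
every positive integer `n` there is a type `p'` with denominator `n`
(`n·p'(x) ∈ ℤ`) such that `|p x - p' x| ≤ 1/n` for all `x`. -/
theorem stmt8 {X : Type*} [Fintype X] (n : ℕ) (hn : 0 < n)
    (p : X → ℝ) (hp0 : ∀ x, 0 ≤ p x) (hp1 : ∑ x, p x = 1) :
    ∃ p' : X → ℝ, (∀ x, 0 ≤ p' x) ∧ (∑ x, p' x = 1) ∧
      (∀ x, ∃ k : ℤ, (n : ℝ) * p' x = k) ∧
      (∀ x, |p x - p' x| ≤ 1 / n) := by
  classical
  have hn' : (0 : ℝ) < n := Nat.cast_pos.mpr hn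
  obtain ⟨k, hk0, hksum, hkapprox⟩ :=
    (univ : Finset X).exists_int_approx_sum_eq_floor (fun x => n * p x)
      fun x _ => mul_nonneg hn'.le (hp0 x)
  have hksum' : ∑ x, (k x : ℝ) = n := by
    rw [← mul_sum, hp1, mul_one, Int.floor_natCast] at hksum
    exact_mod_cast hksum
  refine ⟨fun x => k x / n, fun x => by positivity [hk0 x (mem_univ x)], ?_,
    fun x => ⟨k x, by field_simp⟩, fun x => ?_⟩
  · rw [← sum_div, hksum', div_self hn'.ne']
  · have hscale : p x - k x / n = (n * p x - k x) / n := by field_simp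
    calc |p x - k x / n| = |n * p x - k x| / n := by rw [hscale, abs_div, abs_of_pos hn']
      _ ≤ 1 / n := div_le_div_of_nonneg_right (hkapprox x (mem_univ x)).le hn'.le
end

section
/- Let X, Y be finite sets, n a positive integer, p_X a type with denominator n on X (i.e., n·p_X(x) ∈ ℤ for all x), and V : X → pmf(Y) a conditional pmf. Then there exists a conditional pmf V' : X → pmf(Y) such that n·p_X(x)·V'(y|x) ∈ ℤ for all (x,y) and |p_X(x)·V'(y|x) - p_X(x)·V(y|x)| ≤ 1/n for all (x,y) ∈ X × Y. -/
/-!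
Round cumulative sums: for reals `a₁, …, a_N` with partial sums `Sᵢ`, the integers
`⌊Sᵢ⌋ - ⌊Sᵢ₋₁⌋` telescope to `⌊S_N⌋` and each lies within `1` of `aᵢ`. Applied to the row
`n·p_X(x)·V(·|x)`, whose total `n·p_X(x)` is an integer, this yields integers `k(y)` summing to
`n·p_X(x)` with `|k(y) - n·p_X(x)·V(y|x)| < 1`; dividing by `n·p_X(x)` gives `V'(·|x)`.
-/

open Finset

theorem exists_int_abs_sub_lt_one_sum_eq_floor_sum {Y : Type*} (s : Finset Y) (a : Y → ℝ) :
    ∃ k : Y → ℤ, ∑ y ∈ s, (k y : ℝ) = ⌊∑ y ∈ s, a y⌋ ∧ ∀ y ∈ s, |(k y : ℝ) - a y| < 1 := by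
  classical
  induction s using Finset.induction_on with
  | empty => exact ⟨0, by simp, by simp⟩
  | @insert b s hb ih =>
    obtain ⟨k, hk_sum, hk_err⟩ := ih
    set B := ∑ y ∈ s, a y
    have hk_eq : ∀ y ∈ s, Function.update k b (⌊a b + B⌋ - ⌊B⌋) y = k y := fun y hy =>
      Function.update_of_ne (ne_of_mem_of_not_mem hy hb) _ _
    have hk_sum' : ∑ y ∈ s, (Function.update k b (⌊a b + B⌋ - ⌊B⌋) y : ℝ) = ⌊B⌋ := by
      rw [← hk_sum]
      exact sum_congr rfl fun y hy => by rw [hk_eq y hy]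
    refine ⟨Function.update k b (⌊a b + B⌋ - ⌊B⌋), ?_, ?_⟩
    · rw [sum_insert hb, sum_insert hb, hk_sum', Function.update_self]
      push_cast
      ring
    · intro y hy
      rcases mem_insert.mp hy with rfl | hy
      · rw [Function.update_self, abs_lt]
        push_cast
        constructor <;>
          linarith [Int.floor_le (a y + B), Int.lt_floor_add_one (a y + B),
            Int.floor_le B, Int.lt_floor_add_one B]
      · rw [hk_eq y hy]
        exact hk_err y hy

theorem exists_mem_stdSimplex_natCast_mul_int_abs_sub_lt_one {Y : Type*} [Fintype Y]
    (m : ℕ) {q : Y → ℝ} (hq : q ∈ stdSimplex ℝ Y) :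
    ∃ q' ∈ stdSimplex ℝ Y,
      ∀ y, (∃ k : ℤ, (m : ℝ) * q' y = k) ∧ |(m : ℝ) * q' y - m * q y| < 1 := by
  rcases Nat.eq_zero_or_pos m with rfl | hm
  · exact ⟨q, hq, fun _ => ⟨⟨0, by simp⟩, by simp⟩⟩
  have hm' : (0 : ℝ) < m := by exact_mod_cast hm
  obtain ⟨k, hk_sum, hk_err⟩ :=
    exists_int_abs_sub_lt_one_sum_eq_floor_sum univ fun y => (m : ℝ) * q y
  have hmq' : ∀ y, (m : ℝ) * (k y / m) = k y := fun y => mul_div_cancel₀ _ hm'.ne'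
  refine ⟨fun y => k y / m, ⟨fun y => ?_, ?_⟩, fun y => ⟨⟨k y, hmq' y⟩, ?_⟩⟩
  · have hk_gt : (-1 : ℝ) < k y := by
      linarith [(abs_lt.mp (hk_err y (mem_univ y))).1, mul_nonneg hm'.le (hq.1 y)]
    have hk_nonneg : (0 : ℤ) ≤ k y := by
      have : (-1 : ℤ) < k y := by exact_mod_cast hk_gt
      omega
    positivity
  · rw [← sum_div, hk_sum, ← mul_sum, hq.2, mul_one, Int.floor_natCast]
    exact div_self hm'.ne'
  · rw [hmq']
    exact hk_err y (mem_univ y)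

theorem stmt9_general {X Y : Type*} [Fintype X] [Fintype Y] (n : ℕ) (hn : 0 < n)
    (pX : X → ℝ) (hpX0 : ∀ x, 0 ≤ pX x)
    (hpXtype : ∀ x, ∃ k : ℤ, (n : ℝ) * pX x = k)
    (V : X → Y → ℝ) (hV : ∀ x, (∀ y, 0 ≤ V x y) ∧ ∑ y, V x y = 1) :
    ∃ V' : X → Y → ℝ, (∀ x, (∀ y, 0 ≤ V' x y) ∧ ∑ y, V' x y = 1) ∧
      (∀ x y, ∃ k : ℤ, (n : ℝ) * (pX x * V' x y) = k) ∧
      (∀ x y, |pX x * V' x y - pX x * V x y| ≤ 1 / n) := by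
  have hn' : (0 : ℝ) < n := by exact_mod_cast hn
  have hrow : ∀ x, ∃ W ∈ stdSimplex ℝ Y,
      ∀ y, (∃ k : ℤ, (n : ℝ) * (pX x * W y) = k) ∧ |pX x * W y - pX x * V x y| ≤ 1 / n := by
    intro x
    obtain ⟨m, hm⟩ := hpXtype x
    lift m to ℕ using by exact_mod_cast hm ▸ mul_nonneg hn'.le (hpX0 x)
    rw [Int.cast_natCast] at hm
    obtain ⟨W, hW, hW_round⟩ := exists_mem_stdSimplex_natCast_mul_int_abs_sub_lt_one m (hV x)
    refine ⟨W, hW, fun y => ⟨?_, ?_⟩⟩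
    · rw [← mul_assoc, hm]
      exact_mod_cast (hW_round y).1
    · have hpX : pX x = m / n := by
        rw [eq_div_iff hn'.ne', mul_comm, hm]
      have hdiff : pX x * W y - pX x * V x y = (m * W y - m * V x y) / n := by
        rw [hpX]
        ring
      rw [hdiff, abs_div, abs_of_pos hn']
      exact div_le_div_of_nonneg_right (hW_round y).2.le hn'.le
  choose V' hV' hV'_round using hrow
  exact ⟨V', hV', fun x y => (hV'_round x y).1, fun x y => (hV'_round x y).2⟩

/-- Conditional type approximation (Lemma 4): given a type `p_X` with
denominator `n` on `X` and a conditional pmf `V : X → P(Y)`, there is a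
conditional pmf `V'` with `n·p_X(x)·V'(y|x) ∈ ℤ` and
`|p_X(x)·V'(y|x) - p_X(x)·V(y|x)| ≤ 1/n` for all `(x,y)`. -/
theorem stmt9 {X Y : Type*} [Fintype X] [Fintype Y] (n : ℕ) (hn : 0 < n)
    (pX : X → ℝ) (hpX0 : ∀ x, 0 ≤ pX x) (hpX1 : ∑ x, pX x = 1)
    (hpXtype : ∀ x, ∃ k : ℤ, (n : ℝ) * pX x = k)
    (V : X → Y → ℝ) (hV : ∀ x, (∀ y, 0 ≤ V x y) ∧ ∑ y, V x y = 1) :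
    ∃ V' : X → Y → ℝ, (∀ x, (∀ y, 0 ≤ V' x y) ∧ ∑ y, V' x y = 1) ∧
      (∀ x y, ∃ k : ℤ, (n : ℝ) * (pX x * V' x y) = k) ∧
      (∀ x y, |pX x * V' x y - pX x * V x y| ≤ 1 / n) :=
  stmt9_general n hn pX hpX0 hpXtype V hV
end

section
/- Let X, Y be finite sets, p_X a pmf on X, and V, Ṽ conditional pmfs from X to Y with |p_X(x)·Ṽ(y|x) - p_X(x)·V(y|x)| ≤ ξ for all (x,y), where 0 < ξ ≤ 1/(|X|·e). Let p_Y(y) = ∑_x p_X(x)V(y|x) and p̃_Y(y) = ∑_x p_X(x)Ṽ(y|x). Then |D(p_X·V ‖ p_X × p_Y) - D(p_X·Ṽ ‖ p_X × p̃_Y)| ≤ ξ·|X|·|Y|·(log(1/ξ) + log(1/(ξ·|X|))). -/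
/-!
With `q = p_X·V` and `p_Y` its output marginal, the mutual information is
`H(p_X) + H(p_Y) - H(q)`, where `H(r) = ∑ i, negMulLog (r i)` and `negMulLog t = -t log t`;
the term `H(p_X)` is the same for `V` and `Ṽ`. On `[0, 1]`, `negMulLog` has modulus of
continuity `δ ↦ negMulLog δ` for `δ ≤ 1/e`. The joint entries differ by at most `ξ` and the
output entries by at most `ξ|X|`, so the two entropy differences are at most
`|X||Y|·negMulLog ξ` and `|Y|·negMulLog (ξ|X|)`, whose sum is the bound.
-/

open Finset Real

lemma mul_log_le_mul_log_of_le {a b : ℝ} (ha : 0 ≤ a) (hab : a ≤ b) :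
    a * log a ≤ a * log b := by
  rcases ha.eq_or_lt with rfl | ha
  · simp
  · exact mul_le_mul_of_nonneg_left (log_le_log ha hab) ha.le

lemma negMulLog_add_le {a b : ℝ} (ha : 0 ≤ a) (hb : 0 ≤ b) :
    negMulLog (a + b) ≤ negMulLog a + negMulLog b := by
  have hla := mul_log_le_mul_log_of_le ha (le_add_of_nonneg_right hb)
  have hlb := mul_log_le_mul_log_of_le hb (le_add_of_nonneg_left ha)
  simp only [negMulLog, neg_mul, add_mul] at *
  linarith

lemma mul_log_sub_log_le {a b : ℝ} (ha : 0 < a) (hb : 0 < b) : a * (log b - log a) ≤ b - a := by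
  have := mul_le_mul_of_nonneg_left (log_le_sub_one_of_pos (div_pos hb ha)) ha.le
  rwa [log_div hb.ne' ha.ne', mul_sub, mul_sub, mul_div_cancel₀ _ ha.ne', mul_one,
    ← mul_sub] at this

lemma negMulLog_sub_negMulLog_le {a b : ℝ} (ha : 0 ≤ a) (hab : a ≤ b) (hb : b ≤ 1) :
    negMulLog a - negMulLog b ≤ b - a := by
  have hlog_b : (b - a) * log b ≤ 0 :=
    mul_nonpos_of_nonneg_of_nonpos (sub_nonneg.2 hab) (log_nonpos (ha.trans hab) hb)
  have hgibbs : a * (log b - log a) ≤ b - a := by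
    rcases ha.eq_or_lt with rfl | ha
    · simpa using hab
    · exact mul_log_sub_log_le ha (ha.trans_le hab)
  simp only [negMulLog, neg_mul]
  nlinarith

lemma log_le_neg_one {t : ℝ} (ht : 0 < t) (h : t ≤ exp (-1)) : log t ≤ -1 := by
  simpa using log_le_log ht h

lemma self_le_negMulLog {t : ℝ} (ht : 0 ≤ t) (h : t ≤ exp (-1)) : t ≤ negMulLog t := by
  rcases ht.eq_or_lt with rfl | ht
  · simp
  · have := log_le_neg_one ht h
    simp only [negMulLog, neg_mul]
    nlinarith

lemma negMulLog_le_negMulLog {s t : ℝ} (hs : 0 ≤ s) (hst : s ≤ t) (ht : t ≤ exp (-1)) :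
    negMulLog s ≤ negMulLog t := by
  have ht1 : t ≤ 1 := ht.trans (by simp)
  rcases hs.eq_or_lt with rfl | hs
  · simpa using negMulLog_nonneg hst ht1
  have hlog_t := log_le_neg_one (hs.trans_le hst) ht
  have hgibbs := mul_log_sub_log_le hs (hs.trans_le hst)
  simp only [negMulLog, neg_mul]
  nlinarith [mul_nonneg (sub_nonneg.2 hst) (by linarith : (0:ℝ) ≤ -log t - 1)]

lemma abs_negMulLog_sub_negMulLog_le {a b δ : ℝ} (ha : a ∈ Set.Icc (0 : ℝ) 1)
    (hb : b ∈ Set.Icc (0 : ℝ) 1) (hab : |a - b| ≤ δ) (hδ : δ ≤ exp (-1)) :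
    |negMulLog a - negMulLog b| ≤ negMulLog δ := by
  wlog hle : a ≤ b generalizing a b
  · rw [abs_sub_comm] at hab ⊢
    exact this hb ha hab (le_of_not_ge hle)
  obtain ⟨t, ht, rfl⟩ : ∃ t, 0 ≤ t ∧ b = a + t := ⟨b - a, sub_nonneg.2 hle, by ring⟩
  have htδ : t ≤ δ := (le_abs_self t).trans (by simpa [abs_sub_comm] using hab)
  have ht_le : negMulLog t ≤ negMulLog δ := negMulLog_le_negMulLog ht htδ hδ
  rw [abs_le]
  constructor
  · linarith [negMulLog_add_le ha.1 ht]
  · calc negMulLog a - negMulLog (a + t) ≤ a + t - a :=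
          negMulLog_sub_negMulLog_le ha.1 (le_add_of_nonneg_right ht) hb.2
      _ = t := by ring
      _ ≤ negMulLog t := self_le_negMulLog ht (htδ.trans hδ)
      _ ≤ negMulLog δ := ht_le

lemma abs_sum_sub_sum_le_card_mul {ι : Type*} [Fintype ι] {f g : ι → ℝ} {c : ℝ}
    (h : ∀ i, |f i - g i| ≤ c) : |∑ i, f i - ∑ i, g i| ≤ Fintype.card ι * c := by
  rw [← sum_sub_distrib, ← nsmul_eq_mul]
  exact (abs_sum_le_sum_abs _ _).trans (sum_le_card_nsmul _ _ _ fun i _ => h i)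

lemma abs_sum_negMulLog_sub_sum_negMulLog_le {ι : Type*} [Fintype ι] {f g : ι → ℝ} {δ : ℝ}
    (hf : ∀ i, f i ∈ Set.Icc (0 : ℝ) 1) (hg : ∀ i, g i ∈ Set.Icc (0 : ℝ) 1)
    (hfg : ∀ i, |f i - g i| ≤ δ) (hδ : δ ≤ exp (-1)) :
    |∑ i, negMulLog (f i) - ∑ i, negMulLog (g i)| ≤ Fintype.card ι * negMulLog δ :=
  abs_sum_sub_sum_le_card_mul fun i => abs_negMulLog_sub_negMulLog_le (hf i) (hg i) (hfg i) hδ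

section Channel

variable {X Y : Type*} [Fintype X] [Fintype Y] {pX : X → ℝ} {V : X → Y → ℝ}

lemma sum_mul_channel_mem_Icc (hpX0 : ∀ x, 0 ≤ pX x) (hpX1 : ∑ x, pX x = 1)
    (hV : ∀ x, (∀ y, 0 ≤ V x y) ∧ ∑ y, V x y = 1) (y : Y) :
    ∑ x, pX x * V x y ∈ Set.Icc (0 : ℝ) 1 := by
  have hV1 : ∀ x, V x y ≤ 1 := fun x =>
    (hV x).2 ▸ single_le_sum (fun y _ => (hV x).1 y) (mem_univ y)
  refine ⟨sum_nonneg fun x _ => mul_nonneg (hpX0 x) ((hV x).1 y), ?_⟩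
  calc ∑ x, pX x * V x y ≤ ∑ x, pX x :=
        sum_le_sum fun x _ => mul_le_of_le_one_right (hpX0 x) (hV1 x)
    _ = 1 := hpX1

lemma mul_channel_mem_Icc (hpX0 : ∀ x, 0 ≤ pX x) (hpX1 : ∑ x, pX x = 1)
    (hV : ∀ x, (∀ y, 0 ≤ V x y) ∧ ∑ y, V x y = 1) (x : X) (y : Y) :
    pX x * V x y ∈ Set.Icc (0 : ℝ) 1 := by
  have hq0 : ∀ x', 0 ≤ pX x' * V x' y := fun x' => mul_nonneg (hpX0 x') ((hV x').1 y)
  exact ⟨hq0 x, (single_le_sum (fun x' _ => hq0 x') (mem_univ x)).trans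
    (sum_mul_channel_mem_Icc hpX0 hpX1 hV y).2⟩

lemma mul_log_div_marginals_eq {p v r : ℝ} (hp : 0 ≤ p) (hv : 0 ≤ v) (hr : p * v ≤ r) :
    p * v * log (p * v / (p * r)) = v * negMulLog p - p * v * log r - negMulLog (p * v) := by
  rcases hp.eq_or_lt with rfl | hp
  · simp
  rcases hv.eq_or_lt with rfl | hv
  · simp
  have hr : 0 < r := (mul_pos hp hv).trans_le hr
  simp only [negMulLog]
  rw [log_div (by positivity) (by positivity), log_mul hp.ne' hr.ne', log_mul hp.ne' hv.ne']
  ring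

lemma sum_mul_log_div_marginals_eq (hpX0 : ∀ x, 0 ≤ pX x)
    (hV : ∀ x, (∀ y, 0 ≤ V x y) ∧ ∑ y, V x y = 1) :
    ∑ x, ∑ y, pX x * V x y * log ((pX x * V x y) / (pX x * ∑ x', pX x' * V x' y)) =
      ∑ x, negMulLog (pX x) + ∑ y, negMulLog (∑ x, pX x * V x y) -
        ∑ x, ∑ y, negMulLog (pX x * V x y) := by
  have hq_le : ∀ x y, pX x * V x y ≤ ∑ x', pX x' * V x' y := fun x y =>
    single_le_sum (fun x' _ => mul_nonneg (hpX0 x') ((hV x').1 y)) (mem_univ x)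
  have hX : ∀ x, ∑ y, V x y * negMulLog (pX x) = negMulLog (pX x) := fun x => by
    rw [← sum_mul, (hV x).2, one_mul]
  have hY : ∑ x, ∑ y, pX x * V x y * log (∑ x', pX x' * V x' y) =
      -∑ y, negMulLog (∑ x, pX x * V x y) := by
    rw [sum_comm, ← sum_neg_distrib]
    refine sum_congr rfl fun y _ => ?_
    rw [← sum_mul, negMulLog, neg_mul, neg_neg]
  simp only [fun x y => mul_log_div_marginals_eq (hpX0 x) ((hV x).1 y) (hq_le x y),
    sum_sub_distrib, hX, hY]
  ring

end Channel

/-- Continuity of mutual information in the channel (Lemma 6, part 1): if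
`|p_X(x)·Ṽ(y|x) - p_X(x)·V(y|x)| ≤ ξ` for all `(x,y)`, with
`0 < ξ ≤ 1/(|X|·e)`, then the mutual informations
`D(p_X·V ‖ p_X × p_Y)` and `D(p_X·Ṽ ‖ p_X × p̃_Y)` differ by at most
`ξ·|X|·|Y|·(log(1/ξ) + log(1/(ξ·|X|)))`. -/
theorem stmt10 {X Y : Type*} [Fintype X] [Fintype Y] (ξ : ℝ)
    (hξ0 : 0 < ξ) (hξ1 : ξ ≤ 1 / ((Fintype.card X : ℝ) * Real.exp 1))
    (pX : X → ℝ) (hpX0 : ∀ x, 0 ≤ pX x) (hpX1 : ∑ x, pX x = 1)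
    (V Vt : X → Y → ℝ)
    (hV : ∀ x, (∀ y, 0 ≤ V x y) ∧ ∑ y, V x y = 1)
    (hVt : ∀ x, (∀ y, 0 ≤ Vt x y) ∧ ∑ y, Vt x y = 1)
    (hclose : ∀ x y, |pX x * Vt x y - pX x * V x y| ≤ ξ) :
    |(∑ x, ∑ y, pX x * V x y *
        Real.log ((pX x * V x y) / (pX x * ∑ x', pX x' * V x' y))) -
      ∑ x, ∑ y, pX x * Vt x y *
        Real.log ((pX x * Vt x y) / (pX x * ∑ x', pX x' * Vt x' y))| ≤
      ξ * (Fintype.card X : ℝ) * (Fintype.card Y : ℝ) *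
        (Real.log (1/ξ) + Real.log (1/(ξ * (Fintype.card X : ℝ)))) := by
  have hX : 0 < Fintype.card X := Nat.pos_of_ne_zero fun h => by
    simp only [h, Nat.cast_zero, zero_mul, div_zero] at hξ1
    linarith
  have hξX : ξ * Fintype.card X ≤ exp (-1) := by
    rwa [le_div_iff₀ (by positivity), ← mul_assoc, ← le_div_iff₀ (exp_pos 1), one_div,
      ← exp_neg] at hξ1
  have hξ : ξ ≤ exp (-1) :=
    (le_mul_of_one_le_right hξ0.le (by exact_mod_cast hX)).trans hξX
  have hjoint := abs_sum_negMulLog_sub_sum_negMulLog_le (ι := X × Y)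
    (fun q => mul_channel_mem_Icc hpX0 hpX1 hV q.1 q.2)
    (fun q => mul_channel_mem_Icc hpX0 hpX1 hVt q.1 q.2)
    (fun q => by rw [abs_sub_comm]; exact hclose q.1 q.2) hξ
  have hout := abs_sum_negMulLog_sub_sum_negMulLog_le
    (sum_mul_channel_mem_Icc hpX0 hpX1 hV) (sum_mul_channel_mem_Icc hpX0 hpX1 hVt)
    (fun y => by simpa [abs_sub_comm, mul_comm] using abs_sum_sub_sum_le_card_mul (hclose · y))
    hξX
  simp only [Fintype.sum_prod_type, Fintype.card_prod, Nat.cast_mul] at hjoint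
  rw [sum_mul_log_div_marginals_eq hpX0 hV, sum_mul_log_div_marginals_eq hpX0 hVt]
  have hrhs :
      ξ * Fintype.card X * Fintype.card Y * (log (1 / ξ) + log (1 / (ξ * Fintype.card X))) =
        Fintype.card X * Fintype.card Y * negMulLog ξ +
          Fintype.card Y * negMulLog (ξ * Fintype.card X) := by
    simp only [negMulLog, one_div, log_inv]
    ring
  rw [hrhs]
  rw [abs_le] at hjoint hout ⊢
  constructor <;> linarith
end

section
/- Let X, Y be finite sets, V a conditional pmf from X to Y, and p_X, p̃_X pmfs on X with |p̃_X(x) - p_X(x)| ≤ ξ for all x, where 0 < ξ ≤ 1/(|X|·e). With p_Y, p̃_Y the corresponding output marginals under V, we have |D(p_X·V ‖ p_X × p_Y) - D(p̃_X·V ‖ p̃_X × p̃_Y)| ≤ ξ·|X|·log|Y| + ξ·|X|·|Y|·log(1/(ξ·|X|)). -/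
/-!
Write the mutual information as `H(p_Y) - ∑ₓ p_X(x) H(V(·|x))`. The second term is linear in
`p_X` with coefficients in `[0, log |Y|]`, which gives the first summand of the bound. The output
marginals differ pointwise by at most `δ = ξ |X|`, and for `δ ≤ 1/e` the function `t ↦ -t log t`
has modulus of continuity `-δ log δ` on `[0, 1]`, which gives the second summand.
-/

open Real Finset

namespace Real

lemma monotoneOn_negMulLog : MonotoneOn negMulLog (Set.Icc 0 (exp (-1))) := by
  refine monotoneOn_of_deriv_nonneg (convex_Icc _ _) continuous_negMulLog.continuousOn
    (differentiableOn_negMulLog.mono fun x hx => ?_) fun x hx => ?_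
  · rw [interior_Icc] at hx
    exact hx.1.ne'
  · rw [interior_Icc] at hx
    have hlog : log x < -1 := (log_lt_iff_lt_exp hx.1).2 hx.2
    rw [deriv_negMulLog hx.1.ne']
    linarith

lemma self_le_negMulLog {δ : ℝ} (hδ0 : 0 ≤ δ) (hδ : δ ≤ exp (-1)) : δ ≤ negMulLog δ := by
  rcases hδ0.eq_or_lt with rfl | hδ0
  · simp
  have hlog : log δ ≤ -1 := (log_le_iff_le_exp hδ0).2 hδ
  rw [negMulLog]
  nlinarith

lemma negMulLog_add_le {a t : ℝ} (ha : 0 ≤ a) (ht : 0 ≤ t) :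
    negMulLog (a + t) ≤ negMulLog a + negMulLog t := by
  rcases ha.eq_or_lt with rfl | ha
  · simp
  rcases ht.eq_or_lt with rfl | ht
  · simp
  have hla : log a ≤ log (a + t) := log_le_log ha (by linarith)
  have hlt : log t ≤ log (a + t) := log_le_log ht (by linarith)
  simp only [negMulLog]
  nlinarith

lemma negMulLog_sub_negMulLog_le {a b : ℝ} (ha : 0 ≤ a) (hab : a ≤ b) (hb : b ≤ 1) :
    negMulLog a - negMulLog b ≤ b - a := by
  rcases ha.eq_or_lt with rfl | ha
  · simp only [negMulLog_zero, zero_sub, sub_zero]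
    linarith [negMulLog_nonneg (ha.trans hab) hb]
  have hb0 : 0 < b := ha.trans_le hab
  have hratio : log b - log a ≤ b / a - 1 := by
    rw [← log_div hb0.ne' ha.ne']
    exact log_le_sub_one_of_pos (by positivity)
  have hlogb : log b ≤ 0 := log_nonpos hb0.le hb
  have hscale : a * (b / a - 1) = b - a := by field_simp
  simp only [negMulLog]
  nlinarith [mul_le_mul_of_nonneg_left hratio ha.le]

lemma abs_negMulLog_sub_negMulLog_le {a b δ : ℝ} (ha0 : 0 ≤ a) (ha1 : a ≤ 1) (hb0 : 0 ≤ b)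
    (hb1 : b ≤ 1) (hab : |a - b| ≤ δ) (hδ : δ ≤ exp (-1)) :
    |negMulLog a - negMulLog b| ≤ negMulLog δ := by
  wlog hle : a ≤ b generalizing a b
  · rw [abs_sub_comm]
    exact this hb0 hb1 ha0 ha1 (by rwa [abs_sub_comm]) (le_of_not_ge hle)
  have hgap : b - a ≤ δ := by rw [abs_sub_comm] at hab; exact (le_abs_self _).trans hab
  have hgap0 : 0 ≤ b - a := sub_nonneg.2 hle
  have hδ0 : 0 ≤ δ := hgap0.trans hgap
  have hinc : negMulLog b - negMulLog a ≤ negMulLog δ := by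
    have := negMulLog_add_le ha0 hgap0
    rw [add_sub_cancel] at this
    have hmono := monotoneOn_negMulLog ⟨hgap0, hgap.trans hδ⟩ ⟨hδ0, hδ⟩ hgap
    linarith
  have hdec : negMulLog a - negMulLog b ≤ negMulLog δ :=
    (negMulLog_sub_negMulLog_le ha0 hle hb1).trans (hgap.trans (self_le_negMulLog hδ0 hδ))
  exact abs_sub_le_iff.2 ⟨hdec, hinc⟩

end Real

section Entropy

variable {ι : Type*} [Fintype ι]

noncomputable def shannonEntropy (p : ι → ℝ) : ℝ := ∑ i, negMulLog (p i)

lemma shannonEntropy_nonneg {p : ι → ℝ} (h0 : ∀ i, 0 ≤ p i) (h1 : ∀ i, p i ≤ 1) :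
    0 ≤ shannonEntropy p :=
  sum_nonneg fun i _ => negMulLog_nonneg (h0 i) (h1 i)

/-- Jensen for the concave `negMulLog` with uniform weights. -/
lemma shannonEntropy_le_log_card {p : ι → ℝ} (h0 : ∀ i, 0 ≤ p i) (h1 : ∑ i, p i = 1) :
    shannonEntropy p ≤ log (Fintype.card ι) := by
  have hcard : (0 : ℝ) < Fintype.card ι := by
    have : (univ : Finset ι).Nonempty := nonempty_of_sum_ne_zero (by rw [h1]; exact one_ne_zero)
    exact_mod_cast this.card_pos
  have jensen := concaveOn_negMulLog.le_map_sum (t := univ)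
    (w := fun _ => (Fintype.card ι : ℝ)⁻¹) (p := p) (fun _ _ => by positivity)
    (by simp [hcard.ne']) (fun i _ => h0 i)
  simp only [smul_eq_mul, ← mul_sum, h1, mul_one] at jensen
  rw [shannonEntropy]
  calc ∑ i, negMulLog (p i)
        = Fintype.card ι * ((Fintype.card ι : ℝ)⁻¹ * ∑ i, negMulLog (p i)) := by field_simp
    _ ≤ Fintype.card ι * negMulLog (Fintype.card ι : ℝ)⁻¹ := by gcongr
    _ = log (Fintype.card ι) := by
        rw [negMulLog, log_inv]
        field_simp

end Entropy

lemma abs_sum_sub_mul_le {ι : Type*} [Fintype ι] {p q c : ι → ℝ} {ξ C : ℝ}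
    (hpq : ∀ i, |p i - q i| ≤ ξ) (hc : ∀ i, |c i| ≤ C) :
    |∑ i, (p i - q i) * c i| ≤ ξ * Fintype.card ι * C :=
  calc |∑ i, (p i - q i) * c i| ≤ ∑ i, |p i - q i| * |c i| := by
        simpa only [abs_mul] using abs_sum_le_sum_abs (fun i => (p i - q i) * c i) univ
    _ ≤ ∑ _i : ι, ξ * C := by
        gcongr with i
        · exact (abs_nonneg _).trans (hpq i)
        · exact hpq i
        · exact hc i
    _ = ξ * Fintype.card ι * C := by simp only [sum_const, card_univ, nsmul_eq_mul]; ring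

section Channel

variable {X Y : Type*} [Fintype X]

def channelOutput (V : X → Y → ℝ) (p : X → ℝ) (y : Y) : ℝ := ∑ x, p x * V x y

lemma channelOutput_nonneg {V : X → Y → ℝ} {p : X → ℝ} (hV : ∀ x y, 0 ≤ V x y)
    (hp : ∀ x, 0 ≤ p x) (y : Y) : 0 ≤ channelOutput V p y :=
  sum_nonneg fun x _ => mul_nonneg (hp x) (hV x y)

lemma channelOutput_le_one {V : X → Y → ℝ} {p : X → ℝ} (hV : ∀ x y, V x y ≤ 1)
    (hp0 : ∀ x, 0 ≤ p x) (hp1 : ∑ x, p x = 1) (y : Y) : channelOutput V p y ≤ 1 :=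
  calc channelOutput V p y ≤ ∑ x, p x :=
        sum_le_sum fun x _ => mul_le_of_le_one_right (hp0 x) (hV x y)
    _ = 1 := hp1

lemma channelOutput_sub_channelOutput (V : X → Y → ℝ) (p q : X → ℝ) (y : Y) :
    channelOutput V p y - channelOutput V q y = ∑ x, (p x - q x) * V x y := by
  simp only [channelOutput, ← sum_sub_distrib, sub_mul]

/-- `I(X;Y) = H(Y) - H(Y|X)`, written for the divergence form of the mutual information. -/
lemma mutualInfo_eq_shannonEntropy_sub [Fintype Y] {V : X → Y → ℝ} {p : X → ℝ}
    (hV : ∀ x y, 0 ≤ V x y) (hp : ∀ x, 0 ≤ p x) :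
    ∑ x, ∑ y, p x * V x y * log ((p x * V x y) / (p x * ∑ x', p x' * V x' y)) =
      shannonEntropy (channelOutput V p) - ∑ x, p x * shannonEntropy (V x) := by
  have hterm : ∀ x y, p x * V x y * log ((p x * V x y) / (p x * ∑ x', p x' * V x' y)) =
      p x * V x y * log (V x y) - p x * V x y * log (∑ x', p x' * V x' y) := by
    intro x y
    rcases (hp x).eq_or_lt with hpx | hpx
    · simp [← hpx]
    rcases (hV x y).eq_or_lt with hv | hv
    · simp [← hv]
    have hout : 0 < ∑ x', p x' * V x' y := (mul_pos hpx hv).trans_le <|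
      single_le_sum (fun x' _ => mul_nonneg (hp x') (hV x' y)) (mem_univ x)
    rw [mul_div_mul_left _ _ hpx.ne', log_div hv.ne' hout.ne']
    ring
  simp only [hterm, sum_sub_distrib]
  rw [sum_comm (f := fun x y => p x * V x y * log (∑ x', p x' * V x' y))]
  simp only [shannonEntropy, channelOutput, negMulLog, sum_mul, mul_sum, neg_mul, mul_neg,
    sum_neg_distrib, mul_assoc]
  ring

lemma abs_shannonEntropy_channelOutput_sub_le [Fintype Y] {V : X → Y → ℝ} {p q : X → ℝ} {ξ : ℝ}
    (hV0 : ∀ x y, 0 ≤ V x y) (hV1 : ∀ x y, V x y ≤ 1) (hp0 : ∀ x, 0 ≤ p x) (hp1 : ∑ x, p x = 1)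
    (hq0 : ∀ x, 0 ≤ q x) (hq1 : ∑ x, q x = 1) (hpq : ∀ x, |p x - q x| ≤ ξ)
    (hξ : ξ * Fintype.card X ≤ exp (-1)) :
    |shannonEntropy (channelOutput V p) - shannonEntropy (channelOutput V q)| ≤
      Fintype.card Y * negMulLog (ξ * Fintype.card X) := by
  have hclose : ∀ y, |channelOutput V p y - channelOutput V q y| ≤ ξ * Fintype.card X := by
    intro y
    rw [channelOutput_sub_channelOutput, ← mul_one (ξ * _)]
    exact abs_sum_sub_mul_le hpq fun x => (abs_of_nonneg (hV0 x y)).trans_le (hV1 x y)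
  rw [shannonEntropy, shannonEntropy, ← sum_sub_distrib]
  calc _ ≤ ∑ y, |negMulLog (channelOutput V p y) - negMulLog (channelOutput V q y)| :=
        abs_sum_le_sum_abs _ _
    _ ≤ ∑ _y : Y, negMulLog (ξ * Fintype.card X) := sum_le_sum fun y _ =>
        abs_negMulLog_sub_negMulLog_le (channelOutput_nonneg hV0 hp0 y)
          (channelOutput_le_one hV1 hp0 hp1 y) (channelOutput_nonneg hV0 hq0 y)
          (channelOutput_le_one hV1 hq0 hq1 y) (hclose y) hξ
    _ = Fintype.card Y * negMulLog (ξ * Fintype.card X) := by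
        rw [sum_const, card_univ, nsmul_eq_mul]

end Channel

/-- Continuity of mutual information in the input (Lemma 6, part 2): if
`|p̃_X(x) - p_X(x)| ≤ ξ` for all `x`, with `0 < ξ ≤ 1/(|X|·e)`, then
`|D(p_X·V ‖ p_X × p_Y) - D(p̃_X·V ‖ p̃_X × p̃_Y)| ≤
  ξ·|X|·log|Y| + ξ·|X|·|Y|·log(1/(ξ·|X|))`. -/
theorem stmt11 {X Y : Type*} [Fintype X] [Fintype Y] (ξ : ℝ)
    (hξ0 : 0 < ξ) (hξ1 : ξ ≤ 1 / ((Fintype.card X : ℝ) * Real.exp 1))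
    (V : X → Y → ℝ) (hV : ∀ x, (∀ y, 0 ≤ V x y) ∧ ∑ y, V x y = 1)
    (pX pXt : X → ℝ)
    (hpX0 : ∀ x, 0 ≤ pX x) (hpX1 : ∑ x, pX x = 1)
    (hpXt0 : ∀ x, 0 ≤ pXt x) (hpXt1 : ∑ x, pXt x = 1)
    (hclose : ∀ x, |pXt x - pX x| ≤ ξ) :
    |(∑ x, ∑ y, pX x * V x y *
        Real.log ((pX x * V x y) / (pX x * ∑ x', pX x' * V x' y))) -
      ∑ x, ∑ y, pXt x * V x y *
        Real.log ((pXt x * V x y) / (pXt x * ∑ x', pXt x' * V x' y))| ≤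
      ξ * (Fintype.card X : ℝ) * Real.log (Fintype.card Y : ℝ) +
        ξ * (Fintype.card X : ℝ) * (Fintype.card Y : ℝ) *
          Real.log (1/(ξ * (Fintype.card X : ℝ))) := by
  have hV0 x y : 0 ≤ V x y := (hV x).1 y
  have hV1 x y : V x y ≤ 1 := (hV x).2 ▸ single_le_sum (fun y' _ => hV0 x y') (mem_univ y)
  have hclose' x : |pX x - pXt x| ≤ ξ := abs_sub_comm (pX x) (pXt x) ▸ hclose x
  have hcardX : (0 : ℝ) < Fintype.card X := by
    by_contra! h
    simp only [le_antisymm h (Nat.cast_nonneg _), zero_mul, div_zero] at hξ1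
    linarith
  have hδ : ξ * Fintype.card X ≤ exp (-1) := by
    rw [le_div_iff₀ (by positivity)] at hξ1
    rw [exp_neg, ← one_div, le_div_iff₀ (exp_pos 1)]
    linarith
  have hentropy x : |shannonEntropy (V x)| ≤ log (Fintype.card Y) := by
    rw [abs_of_nonneg (shannonEntropy_nonneg (hV0 x) (hV1 x))]
    exact shannonEntropy_le_log_card (hV0 x) (hV x).2
  rw [mutualInfo_eq_shannonEntropy_sub hV0 hpX0, mutualInfo_eq_shannonEntropy_sub hV0 hpXt0]
  calc _ = |(shannonEntropy (channelOutput V pX) - shannonEntropy (channelOutput V pXt)) -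
        ∑ x, (pX x - pXt x) * shannonEntropy (V x)| := by
        congr 1
        simp only [sub_mul, sum_sub_distrib]
        ring
    _ ≤ Fintype.card Y * negMulLog (ξ * Fintype.card X) +
        ξ * Fintype.card X * log (Fintype.card Y) :=
        (abs_sub _ _).trans (add_le_add
          (abs_shannonEntropy_channelOutput_sub_le hV0 hV1 hpX0 hpX1 hpXt0 hpXt1 hclose' hδ)
          (abs_sum_sub_mul_le hclose' hentropy))
    _ = _ := by rw [negMulLog, one_div, log_inv]; ring
end

section
/- Let A be a finite set and n a positive integer. For any permutation-invariant pmf p on Aⁿ, there exists a type t ∈ P_n(A) such that p(x) ≥ (1/(n+1)^{|A|-1}) · (1/|T_n(t)|) · 𝟙{x ∈ T_n(t)} for all x ∈ Aⁿ. -/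
open scoped Classical

open Finset in
private lemma stmt14_exists_perm {A : Type} [Fintype A] {n : ℕ} {x y : Fin n → A}
    (h : ∀ a, (univ.filter fun i => x i = a).card = (univ.filter fun i => y i = a).card) :
    ∃ π : Equiv.Perm (Fin n), y ∘ π = x := by
  have e : ∀ a : A, {i // x i = a} ≃ {i // y i = a} := fun a =>
    Fintype.equivOfCardEq (by simp only [Fintype.card_subtype]; exact h a)
  refine ⟨(Equiv.sigmaFiberEquiv x).symm.trans
    ((Equiv.sigmaCongrRight e).trans (Equiv.sigmaFiberEquiv y)), ?_⟩
  funext i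
  exact (e (x i) ⟨i, rfl⟩).2

open Finset in
private lemma stmt14_sum_counts {A : Type} [Fintype A] {n : ℕ} (x : Fin n → A) :
    ∑ a, (univ.filter fun i => x i = a).card = n := by
  have := Finset.card_eq_sum_card_fiberwise (f := x) (s := univ) (t := univ)
    (fun i _ => mem_univ _)
  simpa using this.symm

open Finset in
private lemma stmt14_type_card_bound {A : Type} [Fintype A] [Nonempty A] (n : ℕ) :
    (univ.image (fun x : Fin n → A => fun a => (univ.filter fun i => x i = a).card)).card
      ≤ (n + 1) ^ (Fintype.card A - 1) := by
  obtain ⟨a₀⟩ := ‹Nonempty A›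
  set t : (Fin n → A) → (A → ℕ) := fun x a => (univ.filter fun i => x i = a).card with ht
  set T := univ.image t with hT
  have hle : ∀ f ∈ T, ∀ a, f a ≤ n := by
    intro f hf a
    obtain ⟨x, -, rfl⟩ := Finset.mem_image.mp hf
    calc (univ.filter fun i => x i = a).card ≤ (univ : Finset (Fin n)).card :=
          card_filter_le _ _
      _ = n := by simp
  have hsumT : ∀ f ∈ T, ∑ a, f a = n := by
    intro f hf
    obtain ⟨x, -, rfl⟩ := Finset.mem_image.mp hf
    exact stmt14_sum_counts x
  set F : (A → ℕ) → ({a : A // a ≠ a₀} → Fin (n + 1)) :=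
    fun f a => ⟨min (f a.1) n, by omega⟩ with hF
  have hinj : Set.InjOn F T := by
    intro f hf g hg hfg
    have hoff : ∀ a : A, a ≠ a₀ → f a = g a := by
      intro a ha
      have := congrFun hfg ⟨a, ha⟩
      have h1 : min (f a) n = min (g a) n := congrArg Fin.val this
      have := hle f hf a
      have := hle g hg a
      omega
    have h1 : f a₀ + ∑ a ∈ univ.erase a₀, f a = n := by
      rw [Finset.add_sum_erase _ _ (mem_univ a₀)]; exact hsumT f hf
    have h2 : g a₀ + ∑ a ∈ univ.erase a₀, g a = n := by
      rw [Finset.add_sum_erase _ _ (mem_univ a₀)]; exact hsumT g hg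
    have heq : ∑ a ∈ univ.erase a₀, f a = ∑ a ∈ univ.erase a₀, g a :=
      Finset.sum_congr rfl fun a ha => hoff a (Finset.mem_erase.mp ha).1
    funext a
    by_cases ha : a = a₀
    · subst ha; omega
    · exact hoff a ha
  calc T.card ≤ (univ : Finset ({a : A // a ≠ a₀} → Fin (n + 1))).card :=
        Finset.card_le_card_of_injOn F (fun _ _ => mem_univ _) hinj
    _ = (n + 1) ^ (Fintype.card A - 1) := by
        simp [Fintype.card_fun, Fintype.card_subtype_compl]

/-- For any permutation-invariant pmf `p` on `Aⁿ` there is a type class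
(given by a representative sequence `x₀`) such that
`p(x) ≥ (n+1)^{-(|A|-1)} · |T_n(type of x₀)|⁻¹ · 𝟙{x ∈ T_n(type of x₀)}`. -/
theorem stmt14 {A : Type} [Fintype A] (n : ℕ) (hn : 0 < n)
    (p : (Fin n → A) → ℝ)
    (hp0 : ∀ x, 0 ≤ p x) (hp1 : ∑ x, p x = 1)
    (hperm : ∀ (π : Equiv.Perm (Fin n)) (x : Fin n → A), p (x ∘ π) = p x) :
    ∃ x₀ : Fin n → A, ∀ x : Fin n → A,
      (if ∀ a, (Finset.univ.filter fun i => x i = a).card =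
          (Finset.univ.filter fun i => x₀ i = a).card then
        (1 / ((n : ℝ) + 1) ^ (Fintype.card A - 1)) *
          (1 / ((Finset.univ.filter fun y : Fin n → A =>
            ∀ a, (Finset.univ.filter fun i => y i = a).card =
              (Finset.univ.filter fun i => x₀ i = a).card).card : ℝ))
      else 0) ≤ p x := by
  classical
  -- the domain is nonempty
  have hne : Nonempty (Fin n → A) := by
    rcases isEmpty_or_nonempty (Fin n → A) with h | h
    · rw [Finset.univ_eq_empty, Finset.sum_empty] at hp1; norm_num at hp1
    · exact h
  have hAne : Nonempty A := ⟨(Classical.arbitrary (Fin n → A)) ⟨0, hn⟩⟩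
  set t : (Fin n → A) → (A → ℕ) :=
    fun x a => (Finset.univ.filter fun i => x i = a).card with ht
  set T := Finset.univ.image t with hT
  have hTcard : T.card ≤ (n + 1) ^ (Fintype.card A - 1) := stmt14_type_card_bound n
  have hTne : T.Nonempty := ⟨t (Classical.arbitrary _), Finset.mem_image_of_mem t (Finset.mem_univ _)⟩
  have hTpos : (0 : ℝ) < T.card := by exact_mod_cast Finset.card_pos.mpr hTne
  -- decompose the total mass over types
  have hfib : ∑ f ∈ T, ∑ x ∈ Finset.univ.filter fun x => t x = f, p x = 1 := by
    rw [Finset.sum_fiberwise_of_maps_to (fun x _ => Finset.mem_image_of_mem t (Finset.mem_univ x))]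
    exact hp1
  -- find a type with mass at least 1/|T|
  obtain ⟨f, hfT, hSf⟩ : ∃ f ∈ T, 1 / (T.card : ℝ) ≤
      ∑ x ∈ Finset.univ.filter fun x => t x = f, p x := by
    by_contra hcon
    push_neg at hcon
    have : (1 : ℝ) < 1 := by
      calc (1 : ℝ) = ∑ f ∈ T, ∑ x ∈ Finset.univ.filter fun x => t x = f, p x := hfib.symm
        _ < ∑ _f ∈ T, 1 / (T.card : ℝ) :=
            Finset.sum_lt_sum_of_nonempty hTne fun f hf => hcon f hf
        _ = 1 := by
            rw [Finset.sum_const, nsmul_eq_mul]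
            field_simp
    linarith
  obtain ⟨x₀, -, rfl⟩ := Finset.mem_image.mp hfT
  refine ⟨x₀, fun x => ?_⟩
  -- the type class of x₀ as it appears in the statement
  set C := Finset.univ.filter fun y : Fin n → A =>
      ∀ a, (Finset.univ.filter fun i => y i = a).card =
        (Finset.univ.filter fun i => x₀ i = a).card with hC
  have hCeq : (Finset.univ.filter fun y => t y = t x₀) = C := by
    apply Finset.filter_congr
    intro y _
    simp only [ht, funext_iff]
  have hconst : ∀ y, (∀ a, (Finset.univ.filter fun i => y i = a).card =
      (Finset.univ.filter fun i => x₀ i = a).card) → p y = p x₀ := by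
    intro y hy
    obtain ⟨π, hπ⟩ := stmt14_exists_perm hy
    rw [← hπ, hperm]
  have hx₀C : x₀ ∈ C := by
    rw [hC, Finset.mem_filter]
    exact ⟨Finset.mem_univ _, fun a => rfl⟩
  have hCpos : (0 : ℝ) < C.card := by
    exact_mod_cast Finset.card_pos.mpr ⟨x₀, hx₀C⟩
  -- the mass of the class equals |C| · p x₀
  have hmass : ∑ y ∈ Finset.univ.filter fun y => t y = t x₀, p y = C.card * p x₀ := by
    rw [hCeq]
    rw [Finset.sum_congr rfl fun y hy => hconst y (Finset.mem_filter.mp hy).2]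
    rw [Finset.sum_const, nsmul_eq_mul]
  -- the key lower bound for p x₀
  have hkey : 1 / ((n : ℝ) + 1) ^ (Fintype.card A - 1) * (1 / (C.card : ℝ)) ≤ p x₀ := by
    have h1 : (1 : ℝ) / ((n : ℝ) + 1) ^ (Fintype.card A - 1) ≤ 1 / (T.card : ℝ) := by
      apply one_div_le_one_div_of_le hTpos
      calc (T.card : ℝ) ≤ ((n + 1 : ℕ) : ℝ) ^ (Fintype.card A - 1) := by
            exact_mod_cast hTcard
        _ = ((n : ℝ) + 1) ^ (Fintype.card A - 1) := by push_cast; ring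
    have h2 : 1 / ((n : ℝ) + 1) ^ (Fintype.card A - 1) ≤ C.card * p x₀ :=
      le_trans h1 (hSf.trans_eq hmass)
    rw [mul_one_div, div_le_iff₀ hCpos]
    linarith [h2]
  split_ifs with h
  · calc 1 / ((n : ℝ) + 1) ^ (Fintype.card A - 1) * (1 / (C.card : ℝ)) ≤ p x₀ := hkey
      _ = p x := (hconst x h).symm
  · exact hp0 x
end

section
/- Let X, Y be finite sets, n a positive integer, x ∈ Xⁿ with type p_X, V a conditional type with denominator n, and W a conditional pmf from X to Y. Then for every y ∈ T_n(V, x), the product ∏_{i=1}^n W(y_i|x_i) equals exp(-n·(D(p_X·V ‖ p_X·W) + H(Y|X))), where (X,Y) ~ p_X·V, provided p_X·V ≪ p_X·W (otherwise the product is 0 and D is +∞). -/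
open scoped Classical

/-- Probability of a sequence in a V-shell: if `x` has type `p_X`, `(x,y)` has
conditional type `V` (i.e. the joint counts of `(x,y)` equal `n·p_X·V`), and
`p_X·V ≪ p_X·W`, then `∏ᵢ W(yᵢ|xᵢ) = exp(-n·(D(p_X·V‖p_X·W) + H(Y|X)))`
with `(X,Y) ~ p_X·V`. -/
theorem stmt17 {X Y : Type} [Fintype X] [Fintype Y]
    (n : ℕ) (hn : 0 < n) (x : Fin n → X) (y : Fin n → Y)
    (V W : X → Y → ℝ)
    (hV : ∀ a, (∀ b, 0 ≤ V a b) ∧ ∑ b, V a b = 1)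
    (hW : ∀ a, (∀ b, 0 ≤ W a b) ∧ ∑ b, W a b = 1)
    (hy : ∀ a b, ((Finset.univ.filter fun i => x i = a ∧ y i = b).card : ℝ) =
      ((Finset.univ.filter fun i => x i = a).card : ℝ) * V a b)
    (habs : ∀ a b,
      (((Finset.univ.filter fun i => x i = a).card : ℝ) / n) * W a b = 0 →
      (((Finset.univ.filter fun i => x i = a).card : ℝ) / n) * V a b = 0) :
    ∏ i, W (x i) (y i) =
      Real.exp (-(n : ℝ) *
        ((∑ a, ∑ b, (((Finset.univ.filter fun i => x i = a).card : ℝ) / n) *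
            V a b * Real.log
              (((((Finset.univ.filter fun i => x i = a).card : ℝ) / n) * V a b) /
               ((((Finset.univ.filter fun i => x i = a).card : ℝ) / n) * W a b))) +
         (-∑ a, ∑ b, (((Finset.univ.filter fun i => x i = a).card : ℝ) / n) *
            V a b * Real.log (V a b)))) := by
  classical
  have hnne : (n:ℝ) ≠ 0 := by positivity
  set Na : X → ℕ := fun a => (Finset.univ.filter fun i => x i = a).card with hNa
  set N : X → Y → ℕ := fun a b => (Finset.univ.filter fun i => x i = a ∧ y i = b).card with hN
  -- rewrite exponent as a double sum
  have hE : ∑ a, ∑ b, (N a b : ℝ) *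
          (Real.log (V a b) -
            Real.log ((((Na a : ℝ) / n) * V a b) / (((Na a : ℝ) / n) * W a b)))
      = (n:ℝ) * (∑ a, ∑ b, ((Na a : ℝ) / n) * V a b * Real.log (V a b))
        - (n:ℝ) * (∑ a, ∑ b, ((Na a : ℝ) / n) * V a b * Real.log
              ((((Na a : ℝ) / n) * V a b) / (((Na a : ℝ) / n) * W a b))) := by
    rw [Finset.mul_sum, Finset.mul_sum, ← Finset.sum_sub_distrib]
    refine Finset.sum_congr rfl fun a _ => ?_
    rw [Finset.mul_sum, Finset.mul_sum, ← Finset.sum_sub_distrib]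
    refine Finset.sum_congr rfl fun b _ => ?_
    have hNab : (N a b : ℝ) = (Na a : ℝ) * V a b := hy a b
    rw [hNab]
    field_simp
  have hring : (-(n : ℝ) *
        ((∑ a, ∑ b, ((Na a : ℝ) / n) * V a b * Real.log
              ((((Na a : ℝ) / n) * V a b) / (((Na a : ℝ) / n) * W a b))) +
         (-∑ a, ∑ b, ((Na a : ℝ) / n) * V a b * Real.log (V a b))))
      = (n:ℝ) * (∑ a, ∑ b, ((Na a : ℝ) / n) * V a b * Real.log (V a b))
        - (n:ℝ) * (∑ a, ∑ b, ((Na a : ℝ) / n) * V a b * Real.log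
              ((((Na a : ℝ) / n) * V a b) / (((Na a : ℝ) / n) * W a b))) := by
    ring
  rw [hring, ← hE, Real.exp_sum]
  -- turn LHS into a product over pairs
  have hL : ∏ i, W (x i) (y i)
      = ∏ p : X × Y, W p.1 p.2 ^ (Finset.univ.filter fun i => (x i, y i) = p).card := by
    have h2 : ∏ i, W (x i) (y i)
        = ∏ p ∈ Finset.univ.image (fun i => (x i, y i)),
            W p.1 p.2 ^ (Finset.univ.filter fun i => (x i, y i) = p).card :=
      Finset.prod_comp (fun p : X × Y => W p.1 p.2) (fun i => (x i, y i))
    rw [h2]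
    refine Finset.prod_subset (Finset.subset_univ _) ?_
    intro p _ hp
    have hc : (Finset.univ.filter fun i => (x i, y i) = p).card = 0 := by
      rw [Finset.card_eq_zero, Finset.filter_eq_empty_iff]
      intro i _
      intro h
      exact hp (Finset.mem_image.2 ⟨i, Finset.mem_univ i, h⟩)
    simp [hc]
  rw [hL, Fintype.prod_prod_type]
  refine Finset.prod_congr rfl fun a _ => ?_
  rw [Real.exp_sum]
  refine Finset.prod_congr rfl fun b _ => ?_
  have hfil : (Finset.univ.filter fun i => (x i, y i) = (a, b)).card = N a b := by
    simp only [hN, Prod.mk.injEq]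
  rw [hfil]
  rcases Nat.eq_zero_or_pos (N a b) with h0 | hpos
  · simp [h0]
  · -- positivity facts
    have hNab : (N a b : ℝ) = (Na a : ℝ) * V a b := hy a b
    have hNabpos : (0:ℝ) < (N a b : ℝ) := by exact_mod_cast hpos
    have hVnn := (hV a).1 b
    have hNann : (0:ℝ) ≤ (Na a : ℝ) := by positivity
    have hVpos : 0 < V a b := by
      rcases lt_or_eq_of_le hVnn with h | h
      · exact h
      · exfalso; rw [hNab, ← h] at hNabpos; simp at hNabpos
    have hNapos : (0:ℝ) < (Na a : ℝ) := by
      rcases lt_or_eq_of_le hNann with h | h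
      · exact h
      · exfalso; rw [hNab, ← h] at hNabpos; simp at hNabpos
    have hppos : 0 < (Na a : ℝ) / n := by positivity
    have hpV : 0 < ((Na a : ℝ) / n) * V a b := by positivity
    have hpW : 0 < ((Na a : ℝ) / n) * W a b := by
      rcases lt_or_eq_of_le (mul_nonneg hppos.le ((hW a).1 b)) with h | h
      · exact h
      · exact absurd (habs a b h.symm) (ne_of_gt hpV)
    have hWpos : 0 < W a b := by
      by_contra h
      push_neg at h
      have hz : W a b = 0 := le_antisymm h ((hW a).1 b)
      rw [hz, mul_zero] at hpW; exact lt_irrefl _ hpW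
    have hr : (((Na a : ℝ) / n) * V a b) / (((Na a : ℝ) / n) * W a b) = V a b / W a b := by
      rw [mul_div_mul_left _ _ (ne_of_gt hppos)]
    rw [hr, Real.log_div (ne_of_gt hVpos) (ne_of_gt hWpos)]
    have hlw : Real.log (V a b) - (Real.log (V a b) - Real.log (W a b)) = Real.log (W a b) := by
      ring
    rw [hlw, Real.exp_nat_mul, Real.exp_log hWpos]
end

section
/- Let X, Y be finite sets, p_X a pmf on X, W a conditional pmf from X to Y, q a pmf on Y, and α ∈ [0,1). Then the infimum over all conditional pmfs V from X to Y of α·D(p_X·V ‖ p_X·W) + (1-α)·D(p_X·V ‖ p_X × q) equals (1-α)·∑_x p_X(x)·D_α(W(·|x) ‖ q), where D_α is the Rényi divergence of order α. -/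
open Finset

lemma term_ineq (v u : ℝ) (hv : 0 ≤ v) (hu : 0 < u) :
    v - u ≤ v * Real.log (v / u) := by
  rcases eq_or_lt_of_le hv with h | h
  · simp [← h]; positivity
  · have h1 : Real.log (u / v) ≤ u / v - 1 := Real.log_le_sub_one_of_pos (by positivity)
    have h2 : Real.log (u / v) = - Real.log (v / u) := by
      rw [← Real.log_inv]; congr 1; field_simp
    have h3 : v * Real.log (u / v) ≤ v * (u / v - 1) := mul_le_mul_of_nonneg_left h1 h.le
    have h4 : v * (u / v - 1) = u - v := by field_simp
    rw [h2, h4] at h3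
    linarith

lemma gibbs {Y : Type} [Fintype Y] (V u : Y → ℝ) (hV : ∀ y, 0 ≤ V y)
    (hu : ∀ y, 0 < u y) (hVs : ∑ y, V y = 1) (hus : ∑ y, u y = 1) :
    0 ≤ ∑ y, V y * Real.log (V y / u y) := by
  have h : ∑ y, (V y - u y) ≤ ∑ y, V y * Real.log (V y / u y) :=
    Finset.sum_le_sum fun y _ => term_ineq _ _ (hV y) (hu y)
  rwa [Finset.sum_sub_distrib, hVs, hus, sub_self] at h

/-- Variational formula for the Rényi divergence (channel version): for
`α ∈ [0,1)`, a pmf `p_X`, a strictly positive channel `W` and strictly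
positive pmf `q`,
`inf_V α·D(p_X·V ‖ p_X·W) + (1-α)·D(p_X·V ‖ p_X × q)
  = (1-α)·∑_x p_X(x)·D_α(W(·|x) ‖ q)`,
where the infimum ranges over all conditional pmfs `V : X → P(Y)` and
`D_α(p‖q) = (α-1)⁻¹·log ∑ p^α q^{1-α}`. -/
theorem stmt18 {X Y : Type} [Fintype X] [Fintype Y]
    (pX : X → ℝ) (hpX0 : ∀ x, 0 ≤ pX x) (hpX1 : ∑ x, pX x = 1)
    (W : X → Y → ℝ) (hW : ∀ x, (∀ y, 0 < W x y) ∧ ∑ y, W x y = 1)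
    (q : Y → ℝ) (hq : (∀ y, 0 < q y) ∧ ∑ y, q y = 1)
    (α : ℝ) (hα : α ∈ Set.Ico (0:ℝ) 1) :
    sInf {v : ℝ | ∃ V : X → Y → ℝ,
        (∀ x, (∀ y, 0 ≤ V x y) ∧ ∑ y, V x y = 1) ∧
        v = α * (∑ x, ∑ y, pX x * V x y *
              Real.log ((pX x * V x y) / (pX x * W x y))) +
            (1 - α) * (∑ x, ∑ y, pX x * V x y *
              Real.log ((pX x * V x y) / (pX x * q y)))} =
      (1 - α) * ∑ x, pX x *
        ((1 / (α - 1)) * Real.log (∑ y, W x y ^ α * q y ^ (1 - α))) := by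
  obtain ⟨hα0, hα1⟩ := hα
  obtain ⟨hq0, hq1⟩ := hq
  have hα1' : α - 1 ≠ 0 := by linarith
  -- handle empty Y
  have hXne : Nonempty X := by
    by_contra h
    rw [not_nonempty_iff] at h
    rw [Finset.univ_eq_empty, Finset.sum_empty] at hpX1
    exact one_ne_zero hpX1.symm
  rcases isEmpty_or_nonempty Y with hY | hY
  · have hS : {v : ℝ | ∃ V : X → Y → ℝ,
        (∀ x, (∀ y, 0 ≤ V x y) ∧ ∑ y, V x y = 1) ∧
        v = α * (∑ x, ∑ y, pX x * V x y *
              Real.log ((pX x * V x y) / (pX x * W x y))) +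
            (1 - α) * (∑ x, ∑ y, pX x * V x y *
              Real.log ((pX x * V x y) / (pX x * q y)))} = ∅ := by
      rw [Set.eq_empty_iff_forall_notMem]
      rintro v ⟨V, hV, -⟩
      obtain ⟨x⟩ := hXne
      have := (hV x).2
      rw [Finset.univ_eq_empty, Finset.sum_empty] at this
      exact one_ne_zero this.symm
    rw [hS, Real.sInf_empty]
    simp [Finset.univ_eq_empty (α := Y)]
  -- main case
  set u : X → Y → ℝ := fun x y => W x y ^ α * q y ^ (1 - α) with hu_def
  have hu0 : ∀ x y, 0 < u x y := fun x y =>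
    mul_pos (Real.rpow_pos_of_pos ((hW x).1 y) α) (Real.rpow_pos_of_pos (hq0 y) (1 - α))
  set Z : X → ℝ := fun x => ∑ y, u x y with hZ_def
  have hZ0 : ∀ x, 0 < Z x := fun x => Finset.sum_pos (fun y _ => hu0 x y) Finset.univ_nonempty
  -- normalized tilted channel
  set Vs : X → Y → ℝ := fun x y => u x y / Z x with hVs_def
  have hVs0 : ∀ x y, 0 < Vs x y := fun x y => div_pos (hu0 x y) (hZ0 x)
  have hVs1 : ∀ x, ∑ y, Vs x y = 1 := fun x => by
    simp only [hVs_def]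
    rw [← Finset.sum_div, div_self (hZ0 x).ne']
  -- log u decomposition
  have hlogu : ∀ x y, Real.log (u x y) = α * Real.log (W x y) + (1 - α) * Real.log (q y) :=
    fun x y => by
      rw [hu_def]
      rw [Real.log_mul (Real.rpow_pos_of_pos ((hW x).1 y) α).ne'
        (Real.rpow_pos_of_pos (hq0 y) (1 - α)).ne',
        Real.log_rpow ((hW x).1 y), Real.log_rpow (hq0 y)]
  -- per-row term rewrite
  have hterm : ∀ x, ∀ v : Y → ℝ, ∀ y, 0 ≤ v y →
      v y * (α * Real.log (v y / W x y) + (1 - α) * Real.log (v y / q y)) =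
        v y * Real.log (v y / Vs x y) - v y * Real.log (Z x) := by
    intro x v y hv
    rcases eq_or_lt_of_le hv with h | h
    · simp [← h]
    · have hW' := (hW x).1 y
      have hq' := hq0 y
      rw [Real.log_div h.ne' hW'.ne', Real.log_div h.ne' hq'.ne',
        Real.log_div h.ne' (hVs0 x y).ne']
      have : Real.log (Vs x y) = Real.log (u x y) - Real.log (Z x) :=
        Real.log_div (hu0 x y).ne' (hZ0 x).ne'
      rw [this, hlogu x y]
      ring
  -- per-row inequality
  have inner_ge : ∀ x, ∀ v : Y → ℝ, (∀ y, 0 ≤ v y) → (∑ y, v y = 1) →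
      -Real.log (Z x) ≤
        ∑ y, v y * (α * Real.log (v y / W x y) + (1 - α) * Real.log (v y / q y)) := by
    intro x v hv hv1
    have hG := gibbs v (Vs x) hv (hVs0 x) hv1 (hVs1 x)
    calc -Real.log (Z x) = 0 - (∑ y, v y) * Real.log (Z x) := by rw [hv1]; ring
      _ ≤ (∑ y, v y * Real.log (v y / Vs x y)) - (∑ y, v y) * Real.log (Z x) := by
          linarith
      _ = ∑ y, (v y * Real.log (v y / Vs x y) - v y * Real.log (Z x)) := by
          rw [Finset.sum_sub_distrib, Finset.sum_mul]
      _ = _ := by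
          refine (Finset.sum_congr rfl fun y _ => ?_).symm
          exact hterm x v y (hv y)
  -- per-row equality at Vs
  have inner_eq : ∀ x,
      ∑ y, Vs x y * (α * Real.log (Vs x y / W x y) + (1 - α) * Real.log (Vs x y / q y)) =
        -Real.log (Z x) := by
    intro x
    have : ∀ y, Vs x y * Real.log (Vs x y / Vs x y) - Vs x y * Real.log (Z x) =
        - (Vs x y * Real.log (Z x)) := by
      intro y
      rw [div_self (hVs0 x y).ne', Real.log_one]
      ring
    calc ∑ y, Vs x y * (α * Real.log (Vs x y / W x y) + (1 - α) * Real.log (Vs x y / q y))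
        = ∑ y, (Vs x y * Real.log (Vs x y / Vs x y) - Vs x y * Real.log (Z x)) :=
          Finset.sum_congr rfl fun y _ => hterm x (Vs x) y (hVs0 x y).le
      _ = ∑ y, -(Vs x y * Real.log (Z x)) := Finset.sum_congr rfl fun y _ => this y
      _ = -((∑ y, Vs x y) * Real.log (Z x)) := by
          rw [Finset.sum_neg_distrib, Finset.sum_mul]
      _ = -Real.log (Z x) := by rw [hVs1 x, one_mul]
  -- objective rewrite
  have key : ∀ V : X → Y → ℝ, (∀ x, (∀ y, 0 ≤ V x y) ∧ ∑ y, V x y = 1) →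
      α * (∑ x, ∑ y, pX x * V x y *
            Real.log ((pX x * V x y) / (pX x * W x y))) +
          (1 - α) * (∑ x, ∑ y, pX x * V x y *
            Real.log ((pX x * V x y) / (pX x * q y))) =
        ∑ x, pX x * ∑ y, V x y *
          (α * Real.log (V x y / W x y) + (1 - α) * Real.log (V x y / q y)) := by
    intro V hV
    rw [Finset.mul_sum, Finset.mul_sum, ← Finset.sum_add_distrib]
    refine Finset.sum_congr rfl fun x _ => ?_
    rcases eq_or_lt_of_le (hpX0 x) with hx | hx
    · simp [← hx]
    · have h1 : ∀ y, (pX x * V x y) / (pX x * W x y) = V x y / W x y := fun y =>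
        mul_div_mul_left _ _ hx.ne'
      have h2 : ∀ y, (pX x * V x y) / (pX x * q y) = V x y / q y := fun y =>
        mul_div_mul_left _ _ hx.ne'
      simp_rw [h1, h2, Finset.mul_sum]
      rw [← Finset.sum_add_distrib]
      refine Finset.sum_congr rfl fun y _ => ?_
      ring
  -- RHS rewrite
  have hRHS : (1 - α) * ∑ x, pX x *
        ((1 / (α - 1)) * Real.log (∑ y, W x y ^ α * q y ^ (1 - α))) =
      ∑ x, pX x * (-Real.log (Z x)) := by
    rw [Finset.mul_sum]
    refine Finset.sum_congr rfl fun x _ => ?_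
    have : (∑ y, W x y ^ α * q y ^ (1 - α)) = Z x := rfl
    rw [this]
    field_simp
    ring
  rw [hRHS]
  apply IsLeast.csInf_eq
  constructor
  · refine ⟨Vs, fun x => ⟨fun y => (hVs0 x y).le, hVs1 x⟩, ?_⟩
    rw [key Vs (fun x => ⟨fun y => (hVs0 x y).le, hVs1 x⟩)]
    exact (Finset.sum_congr rfl fun x _ => by rw [inner_eq x]).symm
  · rintro v ⟨V, hV, rfl⟩
    rw [key V hV]
    exact Finset.sum_le_sum fun x _ =>
      mul_le_mul_of_nonneg_left (inner_ge x (V x) (hV x).1 (hV x).2) (hpX0 x)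
end
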